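/- arXiv:1210.2775 — 4 statements merged into one kernel-verified Lean document; each statement's English description precedes it below -/
import Mathlib

section
/- If D₁ and D₂ are dimension types, then the function D₁ ⊞ D₂ : σ → ℕ is again a dimension type, i.e. for every prime p it is p-regular, p⁺-singular or p⁻-singular. -/
/-- The Bockstein index set σ: the symbol ℚ together with, for every prime `p`,
the symbols ℤ_p, ℤ_{p^∞} and ℤ_{(p)}. -/
inductive Bock : Type
  | Q : Bock
  | Zp (p : Nat.Primes) : Bock
  | ZpInf (p : Nat.Primes) : Bock
  | Zloc (p : Nat.Primes) : Bock

/-- `D` is `p`-regular: `D(ℤ_{(p)}) = D(ℤ_p) = D(ℤ_{p^∞}) = D(ℚ)`. -/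
def pRegular (D : Bock → ℕ) (p : Nat.Primes) : Prop :=
  D (.Zloc p) = D (.Zp p) ∧ D (.Zp p) = D (.ZpInf p) ∧ D (.ZpInf p) = D .Q

/-- `D` is `p⁺`-singular: `D(ℤ_{p^∞}) = D(ℤ_p)` and
`D(ℤ_{(p)}) = max (D(ℚ)) (D(ℤ_{p^∞}) + 1)`. -/
def pPlusSingular (D : Bock → ℕ) (p : Nat.Primes) : Prop :=
  D (.ZpInf p) = D (.Zp p) ∧ D (.Zloc p) = max (D .Q) (D (.ZpInf p) + 1)

/-- `D` is `p⁻`-singular: `D(ℤ_p) ≥ 1`, `D(ℤ_{p^∞}) = D(ℤ_p) - 1` and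
`D(ℤ_{(p)}) = max (D(ℚ)) (D(ℤ_{p^∞}) + 1)`. -/
def pMinusSingular (D : Bock → ℕ) (p : Nat.Primes) : Prop :=
  1 ≤ D (.Zp p) ∧ D (.ZpInf p) = D (.Zp p) - 1 ∧
    D (.Zloc p) = max (D .Q) (D (.ZpInf p) + 1)

instance (D : Bock → ℕ) (p : Nat.Primes) : Decidable (pRegular D p) := by
  unfold pRegular; infer_instance

instance (D : Bock → ℕ) (p : Nat.Primes) : Decidable (pPlusSingular D p) := by
  unfold pPlusSingular; infer_instance

instance (D : Bock → ℕ) (p : Nat.Primes) : Decidable (pMinusSingular D p) := by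
  unfold pMinusSingular; infer_instance

/-- A dimension type: for every prime `p`, `D` is `p`-regular, `p⁺`-singular
or `p⁻`-singular. -/
def DimensionType (D : Bock → ℕ) : Prop :=
  ∀ p : Nat.Primes, pRegular D p ∨ pPlusSingular D p ∨ pMinusSingular D p

/-- The `p`-singularity sign ε of `D`: `+1` if `p⁺`-singular, `-1` if
`p⁻`-singular, `0` otherwise (i.e. `p`-regular, for dimension types). -/
def bsign (D : Bock → ℕ) (p : Nat.Primes) : ℤ :=
  if pPlusSingular D p then 1 else if pMinusSingular D p then -1 else 0

/-- The product of signs: `ε⊗0 = 0⊗ε = ε`, `ε⊗ε = ε`, `+⊗− = −⊗+ = −`. -/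
def signMul (a b : ℤ) : ℤ :=
  if a = 0 then b else if b = 0 then a else if a = b then a else -1

/-- The operation `D₁ ⊞ D₂` suggested by the Bockstein product theorem. -/
def boxplus (D₁ D₂ : Bock → ℕ) : Bock → ℕ := fun G =>
  match G with
  | .Q => D₁ .Q + D₂ .Q
  | .Zp p => D₁ (.Zp p) + D₂ (.Zp p)
  | .ZpInf p =>
      let e := signMul (bsign D₁ p) (bsign D₂ p)
      let q := D₁ .Q + D₂ .Q
      let s := D₁ (.Zp p) + D₂ (.Zp p)
      if e = 0 then q else if e = 1 then s else s - 1
  | .Zloc p =>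
      let e := signMul (bsign D₁ p) (bsign D₂ p)
      let q := D₁ .Q + D₂ .Q
      let s := D₁ (.Zp p) + D₂ (.Zp p)
      if e = 0 then q else if e = 1 then max q (s + 1) else max q s

/-- The involution `D ↦ D*` exchanging the decorations `+` and `−`. -/
def dual (D : Bock → ℕ) : Bock → ℕ := fun G =>
  match G with
  | .Q => D .Q
  | .Zp p => D (.Zp p)
  | .ZpInf p =>
      if pPlusSingular D p then D (.Zp p) - 1
      else if pMinusSingular D p then D (.Zp p)
      else D (.ZpInf p)
  | .Zloc p =>
      if pPlusSingular D p then max (D .Q) (D (.Zp p))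
      else if pMinusSingular D p then max (D .Q) (D (.Zp p) + 1)
      else D (.Zloc p)

/-- The operation `D₁ ⊕ D₂ = (D₁* ⊞ D₂*)*`. -/
def oplus (D₁ D₂ : Bock → ℕ) : Bock → ℕ :=
  dual (boxplus (dual D₁) (dual D₂))

/-- The pointwise order on functions `σ → ℕ`. -/
def dle (D D' : Bock → ℕ) : Prop := ∀ G, D G ≤ D' G

/-- `dim D = n`: `D(G) ≤ n` for every `G ∈ σ` and `D(G) = n` for some `G ∈ σ`. -/
def dimEq (D : Bock → ℕ) (n : ℕ) : Prop :=
  (∀ G, D G ≤ n) ∧ ∃ G, D G = n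

/-
At a prime `p` the value of `D₁ ⊞ D₂` is written down from `q`, `s_p` and the product sign
`ε = ε₁ ⊗ ε₂` by exactly the formulas defining a `p`-regular, `p⁺`-singular or `p⁻`-singular
function, so only the side conditions of these notions need checking. For `ε = +` there are
none. For `ε = 0` both `Dᵢ` are `p`-regular, whence `s_p = q`. For `ε = −` one of the `Dᵢ` is
`p⁻`-singular, so `Dᵢ(ℤ_p) ≥ 1` and hence `s_p ≥ 1`.
-/

section Sign

variable {D : Bock → ℕ} {p : Nat.Primes}

lemma abs_bsign_le_one (D : Bock → ℕ) (p : Nat.Primes) : |bsign D p| ≤ 1 := by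
  unfold bsign
  split_ifs <;> simp

lemma DimensionType.Zp_eq_Q_of_bsign_eq_zero (hD : DimensionType D)
    (h : bsign D p = 0) : D (.Zp p) = D .Q := by
  rcases hD p with ⟨-, hZp, hZpInf⟩ | hplus | hminus
  · exact hZp.trans hZpInf
  · simp [bsign, hplus] at h
  · simp [bsign, hminus, apply_ite (· = (0 : ℤ))] at h

lemma one_le_Zp_of_bsign_eq_neg_one (h : bsign D p = -1) : 1 ≤ D (.Zp p) := by
  unfold bsign at h
  split_ifs at h with _ hminus
  exact hminus.1

lemma signMul_eq_zero_iff {a b : ℤ} : signMul a b = 0 ↔ a = 0 ∧ b = 0 := by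
  unfold signMul
  split_ifs <;> grind

lemma eq_neg_one_or_eq_neg_one_of_signMul {a b : ℤ} (ha : |a| ≤ 1) (hb : |b| ≤ 1)
    (h₀ : signMul a b ≠ 0) (h₁ : signMul a b ≠ 1) : a = -1 ∨ b = -1 := by
  obtain ⟨ha₁, ha₂⟩ := abs_le.1 ha
  obtain ⟨hb₁, hb₂⟩ := abs_le.1 hb
  unfold signMul at h₀ h₁
  split_ifs at h₀ h₁ <;> omega

end Sign

section Boxplus

variable {D₁ D₂ : Bock → ℕ} {p : Nat.Primes}

lemma pRegular_boxplus (h : signMul (bsign D₁ p) (bsign D₂ p) = 0)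
    (hs : D₁ (.Zp p) + D₂ (.Zp p) = D₁ .Q + D₂ .Q) : pRegular (boxplus D₁ D₂) p := by
  simp [pRegular, boxplus, h, hs]

lemma pPlusSingular_boxplus (h : signMul (bsign D₁ p) (bsign D₂ p) = 1) :
    pPlusSingular (boxplus D₁ D₂) p := by
  simp [pPlusSingular, boxplus, h]

lemma pMinusSingular_boxplus (h₀ : signMul (bsign D₁ p) (bsign D₂ p) ≠ 0)
    (h₁ : signMul (bsign D₁ p) (bsign D₂ p) ≠ 1) (hs : 1 ≤ D₁ (.Zp p) + D₂ (.Zp p)) :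
    pMinusSingular (boxplus D₁ D₂) p := by
  simp [pMinusSingular, boxplus, h₀, h₁, hs]

end Boxplus

/-- If D₁ and D₂ are dimension types, then D₁ ⊞ D₂ is again a
dimension type, i.e. for every prime p it is p-regular, p⁺-singular or
p⁻-singular. -/
theorem boxplus_dimensionType (D₁ D₂ : Bock → ℕ)
    (h₁ : DimensionType D₁) (h₂ : DimensionType D₂) :
    DimensionType (boxplus D₁ D₂) := by
  intro p
  by_cases hzero : signMul (bsign D₁ p) (bsign D₂ p) = 0
  · obtain ⟨e₁, e₂⟩ := signMul_eq_zero_iff.1 hzero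
    refine Or.inl (pRegular_boxplus hzero ?_)
    rw [h₁.Zp_eq_Q_of_bsign_eq_zero e₁, h₂.Zp_eq_Q_of_bsign_eq_zero e₂]
  by_cases hone : signMul (bsign D₁ p) (bsign D₂ p) = 1
  · exact Or.inr (Or.inl (pPlusSingular_boxplus hone))
  refine Or.inr (Or.inr (pMinusSingular_boxplus hzero hone ?_))
  rcases eq_neg_one_or_eq_neg_one_of_signMul (abs_bsign_le_one D₁ p) (abs_bsign_le_one D₂ p)
      hzero hone with e | e
  · exact le_add_right (one_le_Zp_of_bsign_eq_neg_one e)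
  · exact le_add_left (one_le_Zp_of_bsign_eq_neg_one e)
end

section
/- If D₁ and D₂ are dimension types, then D₁ ⊕ D₂ := (D₁* ⊞ D₂*)* is a dimension type. -/
/-! At every prime the three types are preserved by the duality `D ↦ D*`, which exchanges
`p⁺` and `p⁻` (except that a `p⁺`-singular `D` with `D(ℤ_p) = 0` becomes `p`-regular or
`p⁺`-singular), and `⊞` is built so that the sign `ε = ε₁ ⊗ ε₂` dictates the type of the sum.
The only side conditions, `q = s_p` when `ε = 0` and `s_p ≥ 1` when `ε = −`, are inherited
from the summands: a `p`-regular `D` has `D(ℚ) = D(ℤ_p)` and a `p⁻`-singular one `D(ℤ_p) ≥ 1`. -/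

section

variable {D D₁ D₂ : Bock → ℕ} {p : Nat.Primes}

theorem pRegular.not_pPlusSingular (h : pRegular D p) : ¬ pPlusSingular D p := by
  unfold pRegular at h; unfold pPlusSingular; omega

theorem pRegular.not_pMinusSingular (h : pRegular D p) : ¬ pMinusSingular D p := by
  unfold pRegular at h; unfold pMinusSingular; omega

theorem pMinusSingular.not_pPlusSingular (h : pMinusSingular D p) : ¬ pPlusSingular D p := by
  unfold pMinusSingular at h; unfold pPlusSingular; omega

theorem pRegular.dual (h : pRegular D p) : pRegular (dual D) p := by
  unfold pRegular
  simp only [_root_.dual, if_neg h.not_pPlusSingular, if_neg h.not_pMinusSingular]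
  exact h

theorem pMinusSingular.dual (h : pMinusSingular D p) : pPlusSingular (dual D) p := by
  unfold pPlusSingular
  simp only [_root_.dual, if_neg h.not_pPlusSingular, if_pos h, and_self]

theorem pPlusSingular.dual (h : pPlusSingular D p) :
    pRegular (dual D) p ∨ pPlusSingular (dual D) p ∨ pMinusSingular (dual D) p := by
  unfold pRegular pPlusSingular pMinusSingular
  simp only [_root_.dual, if_pos h, true_and]
  unfold pPlusSingular at h
  omega

theorem DimensionType.dual (h : DimensionType D) : DimensionType (dual D) := by
  intro p
  rcases h p with hr | hp | hm
  · exact Or.inl hr.dual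
  · exact hp.dual
  · exact Or.inr (Or.inl hm.dual)

theorem DimensionType.bsign_cases (h : DimensionType D) (p : Nat.Primes) :
    (bsign D p = 0 ∧ D .Q = D (.Zp p)) ∨ bsign D p = 1 ∨
      (bsign D p = -1 ∧ 1 ≤ D (.Zp p)) := by
  rcases h p with hr | hp | hm
  · refine Or.inl ⟨?_, ?_⟩
    · simp only [bsign, if_neg hr.not_pPlusSingular, if_neg hr.not_pMinusSingular]
    · unfold pRegular at hr; omega
  · exact Or.inr (Or.inl (if_pos hp))
  · refine Or.inr (Or.inr ⟨?_, hm.1⟩)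
    simp only [bsign, if_neg hm.not_pPlusSingular, if_pos hm]

theorem boxplus_pRegular (he : signMul (bsign D₁ p) (bsign D₂ p) = 0)
    (hs : D₁ .Q + D₂ .Q = D₁ (.Zp p) + D₂ (.Zp p)) : pRegular (boxplus D₁ D₂) p := by
  simp only [pRegular, boxplus, he, if_true, hs, and_self]

theorem boxplus_pPlusSingular (he : signMul (bsign D₁ p) (bsign D₂ p) = 1) :
    pPlusSingular (boxplus D₁ D₂) p := by
  simp only [pPlusSingular, boxplus, he, one_ne_zero, if_false, if_true, and_self]

theorem boxplus_pMinusSingular (he : signMul (bsign D₁ p) (bsign D₂ p) = -1)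
    (hs : 1 ≤ D₁ (.Zp p) + D₂ (.Zp p)) : pMinusSingular (boxplus D₁ D₂) p := by
  simp only [pMinusSingular, boxplus, he, Int.reduceEq, if_false, true_and]
  omega

theorem DimensionType.boxplus (h₁ : DimensionType D₁) (h₂ : DimensionType D₂) :
    DimensionType (boxplus D₁ D₂) := by
  intro p
  rcases h₁.bsign_cases p with ⟨e₁, hs₁⟩ | e₁ | ⟨e₁, hs₁⟩ <;>
    rcases h₂.bsign_cases p with ⟨e₂, hs₂⟩ | e₂ | ⟨e₂, hs₂⟩ <;>
    first
    | exact Or.inl (boxplus_pRegular (by rw [e₁, e₂]; decide) (by omega))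
    | exact Or.inr (Or.inl (boxplus_pPlusSingular (by rw [e₁, e₂]; decide)))
    | exact Or.inr (Or.inr (boxplus_pMinusSingular (by rw [e₁, e₂]; decide) (by omega)))

end

/-- If D₁ and D₂ are dimension types, then
D₁ ⊕ D₂ := (D₁* ⊞ D₂*)* is a dimension type. -/
theorem oplus_dimensionType (D₁ D₂ : Bock → ℕ)
    (h₁ : DimensionType D₁) (h₂ : DimensionType D₂) :
    DimensionType (oplus D₁ D₂) :=
  (h₁.dual.boxplus h₂.dual).dual
end

section
/- For dimension types D and D', one has D ≤ D' if and only if D(ℚ) ≤ D'(ℚ) and e_p(D) ≤ e_p(D') for every prime p. (This is the paper's claim that the order of dimension types as functions on σ is equivalent to the order of their decorated values n⁻ < n < n⁺ < (n+1)⁻ < … at every prime together with the order of the ℚ-values.) -/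
/-- The decorated value e_p(D): 3*D(Z_p) if D is p-regular,
3*D(Z_p) + 1 if D is p+-singular, 3*D(Z_p) - 1 if D is p--singular. -/
def ep (D : Bock → ℕ) (p : Nat.Primes) : ℕ :=
  if pPlusSingular D p then 3 * D (.Zp p) + 1
  else if pMinusSingular D p then 3 * D (.Zp p) - 1
  else 3 * D (.Zp p)

/-! Given `D(ℚ)`, the three `p`-values of a dimension type are monotone functions of `e = e_p(D)`,
namely `D(ℤ_p) = ⌊(e+1)/3⌋`, `D(ℤ_{p^∞}) = ⌊e/3⌋` and `D(ℤ_{(p)}) = max(D(ℚ), ⌊(e+2)/3⌋)`; conversely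
`e = D(ℤ_p) + D(ℤ_{p^∞}) + min(D(ℤ_{(p)}), D(ℤ_{p^∞}) + 1)` is monotone in those values. -/

section
variable {D : Bock → ℕ} {p : Nat.Primes}

lemma not_pPlusSingular_of_pRegular (h : pRegular D p) : ¬pPlusSingular D p := by
  unfold pRegular pPlusSingular at *
  omega

lemma not_pMinusSingular_of_pRegular (h : pRegular D p) : ¬pMinusSingular D p := by
  unfold pRegular pMinusSingular at *
  omega

lemma not_pPlusSingular_of_pMinusSingular (h : pMinusSingular D p) : ¬pPlusSingular D p := by
  unfold pMinusSingular pPlusSingular at *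
  omega

lemma ep_of_pRegular (h : pRegular D p) : ep D p = 3 * D (.Zp p) := by
  simp [ep, not_pPlusSingular_of_pRegular h, not_pMinusSingular_of_pRegular h]

lemma ep_of_pPlusSingular (h : pPlusSingular D p) : ep D p = 3 * D (.Zp p) + 1 := by
  simp [ep, h]

lemma ep_of_pMinusSingular (h : pMinusSingular D p) : ep D p = 3 * D (.Zp p) - 1 := by
  simp [ep, h, not_pPlusSingular_of_pMinusSingular h]

lemma ep_eq_add_min (h : pRegular D p ∨ pPlusSingular D p ∨ pMinusSingular D p) :
    ep D p = D (.Zp p) + D (.ZpInf p) + min (D (.Zloc p)) (D (.ZpInf p) + 1) := by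
  rcases h with h | h | h
  · rw [ep_of_pRegular h]; unfold pRegular at h; omega
  · rw [ep_of_pPlusSingular h]; unfold pPlusSingular at h; omega
  · rw [ep_of_pMinusSingular h]; unfold pMinusSingular at h; omega

lemma zp_eq_ep (h : pRegular D p ∨ pPlusSingular D p ∨ pMinusSingular D p) :
    D (.Zp p) = (ep D p + 1) / 3 := by
  rcases h with h | h | h
  · rw [ep_of_pRegular h]; omega
  · rw [ep_of_pPlusSingular h]; omega
  · rw [ep_of_pMinusSingular h]; unfold pMinusSingular at h; omega

lemma zpInf_eq_ep (h : pRegular D p ∨ pPlusSingular D p ∨ pMinusSingular D p) :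
    D (.ZpInf p) = ep D p / 3 := by
  rcases h with h | h | h
  · rw [ep_of_pRegular h]; unfold pRegular at h; omega
  · rw [ep_of_pPlusSingular h]; unfold pPlusSingular at h; omega
  · rw [ep_of_pMinusSingular h]; unfold pMinusSingular at h; omega

lemma zloc_eq_ep (h : pRegular D p ∨ pPlusSingular D p ∨ pMinusSingular D p) :
    D (.Zloc p) = max (D .Q) ((ep D p + 2) / 3) := by
  rcases h with h | h | h
  · rw [ep_of_pRegular h]; unfold pRegular at h; omega
  · rw [ep_of_pPlusSingular h]; unfold pPlusSingular at h; omega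
  · rw [ep_of_pMinusSingular h]; unfold pMinusSingular at h; omega

end

/-- For dimension types D and D', one has D ≤ D' iff
D(ℚ) ≤ D'(ℚ) and e_p(D) ≤ e_p(D') for every prime p. -/
theorem dle_iff_decorated (D D' : Bock → ℕ)
    (hD : DimensionType D) (hD' : DimensionType D') :
    dle D D' ↔ (D .Q ≤ D' .Q ∧ ∀ p : Nat.Primes, ep D p ≤ ep D' p) := by
  constructor
  · intro hle
    refine ⟨hle .Q, fun p => ?_⟩
    rw [ep_eq_add_min (hD p), ep_eq_add_min (hD' p)]
    gcongr <;> apply hle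
  · rintro ⟨hQ, he⟩ (_ | p | p | p)
    · exact hQ
    · rw [zp_eq_ep (hD p), zp_eq_ep (hD' p)]
      gcongr
      exact he p
    · rw [zpInf_eq_ep (hD p), zpInf_eq_ep (hD' p)]
      gcongr
      exact he p
    · rw [zloc_eq_ep (hD p), zloc_eq_ep (hD' p)]
      gcongr
      exact he p
end

section
/- Let D be a dimension type with D(ℚ) ≤ 3 and D(G) ≤ 4 for every G ∈ σ. Then D ≤ E, where E : σ → ℕ is the dimension type with E(ℚ) = 3 and, for every prime p, E(ℤ_p) = 4, E(ℤ_{p^∞}) = 3, E(ℤ_{(p)}) = 4 (E is p⁻-singular at every prime). (This is the step in the proof of the main theorem asserting that dim_ℚ Y ≤ 3 together with dim Y ≤ 4 implies d_Y(p) ≤ 4⁻ for all primes p, i.e. d_Y ≤ D₁ + 1.) -/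
/-- The dimension type E: E(ℚ) = 3, E(ℤ_p) = 4, E(ℤ_{p^∞}) = 3,
E(ℤ_{(p)}) = 4 for every prime p (p⁻-singular at every prime). -/
def Eex : Bock → ℕ := fun G =>
  match G with
  | .Q => 3
  | .Zp _ => 4
  | .ZpInf _ => 3
  | .Zloc _ => 4

theorem DimensionType.zpInf_le_or_lt_zloc {D : Bock → ℕ} (hD : DimensionType D)
    (p : Nat.Primes) : D (.ZpInf p) ≤ D .Q ∨ D (.ZpInf p) < D (.Zloc p) := by
  rcases hD p with ⟨-, -, hreg⟩ | ⟨-, hloc⟩ | ⟨-, -, hloc⟩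
  · exact .inl hreg.le
  all_goals exact .inr (hloc ▸ lt_max_of_lt_right (Nat.lt_succ_self _))

/-- Let D be a dimension type with D(ℚ) ≤ 3 and D(G) ≤ 4 for
every G ∈ σ. Then D ≤ E. -/
theorem le_four_minus (D : Bock → ℕ) (hD : DimensionType D)
    (hQ : D .Q ≤ 3) (h4 : ∀ G, D G ≤ 4) :
    dle D Eex := by
  rintro (_ | p | p | p)
  · exact hQ
  · exact h4 _
  · show D (.ZpInf p) ≤ 3
    have hloc := h4 (.Zloc p)
    rcases hD.zpInf_le_or_lt_zloc p with h | h <;> omega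
  · exact h4 _
end
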